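/- Let ℏ, m₀, c > 0 and let v ∈ ℝ³ with 0 < |v| < c. Set β = |v|/c, m = m₀/√(1−β²), W = mc², and P = m v. Then the wave function φ₂(t,x) = exp(−(i/ℏ)(W t − (√2/β) P·x)) satisfies the relativistic Schrödinger equation: iℏ ∂_t φ₂(t,x) + (c²ℏ²/(2W)) Δφ₂(t,x) = 0 for all (t,x) ∈ ℝ × ℝ³. -/

import Mathlib

open Complex

/-- Partial derivative in the `i`-th coordinate direction on `ℝ⁴`. -/
noncomputable def pd (i : Fin 4) (f : (Fin 4 → ℝ) → ℂ) : (Fin 4 → ℝ) → ℂ :=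
  fun x => fderiv ℝ f x (Pi.single i 1)

/-- The relativistic Schrödinger operator `L_s^r φ = iℏ ∂_t φ + (c²ℏ²/(2W)) Δφ`,
with time variable `x 0` and space variables `x 1, x 2, x 3`. -/
noncomputable def Lsr (hbar c W : ℝ) (f : (Fin 4 → ℝ) → ℂ) : (Fin 4 → ℝ) → ℂ :=
  fun x => Complex.I * (hbar : ℂ) * pd 0 f x +
    ((c ^ 2 * hbar ^ 2 / (2 * W) : ℝ) : ℂ) *
      (pd 1 (pd 1 f) x + pd 2 (pd 2 f) x + pd 3 (pd 3 f) x)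

lemma hasFDerivAt_exp_lin (a : Fin 4 → ℂ) (x : Fin 4 → ℝ) :
    HasFDerivAt (fun y : Fin 4 → ℝ => Complex.exp (∑ j, a j * y j))
      (Complex.exp (∑ j, a j * x j) •
        (∑ j, (ContinuousLinearMap.proj j : (Fin 4 → ℝ) →L[ℝ] ℝ).smulRight (a j))) x := by
  have h1 : HasFDerivAt (fun y : Fin 4 → ℝ => (∑ j, a j * y j : ℂ))
      (∑ j, (ContinuousLinearMap.proj j : (Fin 4 → ℝ) →L[ℝ] ℝ).smulRight (a j)) x := by
    have h := (∑ j, (ContinuousLinearMap.proj j : (Fin 4 → ℝ) →L[ℝ] ℝ).smulRight (a j)).hasFDerivAt (x := x)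
    have he : ⇑(∑ j, (ContinuousLinearMap.proj j : (Fin 4 → ℝ) →L[ℝ] ℝ).smulRight (a j))
        = fun y : Fin 4 → ℝ => (∑ j, a j * y j : ℂ) := by
      funext y
      simp [Complex.real_smul, mul_comm]
    rwa [he] at h
  exact h1.cexp

lemma pd_exp_lin (a : Fin 4 → ℂ) (i : Fin 4) :
    pd i (fun y => Complex.exp (∑ j, a j * y j))
      = fun x => a i * Complex.exp (∑ j, a j * x j) := by
  funext x
  rw [pd, (hasFDerivAt_exp_lin a x).fderiv]
  simp [Pi.single_apply, mul_comm]

lemma pd_mul_exp_lin (a : Fin 4 → ℂ) (cst : ℂ) (i : Fin 4) :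
    pd i (fun y => cst * Complex.exp (∑ j, a j * y j))
      = fun x => cst * (a i * Complex.exp (∑ j, a j * x j)) := by
  funext x
  rw [pd, ((hasFDerivAt_exp_lin a x).const_mul cst).fderiv]
  simp [Pi.single_apply, mul_comm, mul_left_comm]


/-- the wave `φ₂ = exp(−(i/ℏ)(W t − (√2/β) P·x))` with relativistic
energy `W = mc²`, momentum `P = mv`, `m = m₀/√(1−β²)`, `β = |v|/c`,
solves the relativistic Schrödinger equation. -/
theorem stmt_6 (hbar m₀ c : ℝ) (hhbar : 0 < hbar) (hm₀ : 0 < m₀) (hc : 0 < c)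
    (v : Fin 3 → ℝ) (hv : 0 < Real.sqrt (∑ k, v k ^ 2))
    (hvc : Real.sqrt (∑ k, v k ^ 2) < c)
    (β m W : ℝ) (P : Fin 3 → ℝ)
    (hβ : β = Real.sqrt (∑ k, v k ^ 2) / c)
    (hmass : m = m₀ / Real.sqrt (1 - β ^ 2))
    (hW : W = m * c ^ 2) (hP : P = fun k => m * v k) :
    ∀ x : Fin 4 → ℝ,
      Lsr hbar c W
        (fun y => Complex.exp (-(Complex.I / (hbar : ℂ)) *
          ((W * y 0 - (Real.sqrt 2 / β) * ∑ k : Fin 3, P k * y k.succ : ℝ) : ℂ))) x = 0 := by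
  intro x
  -- basic positivity facts
  have hβpos : 0 < β := by rw [hβ]; positivity
  have hβlt : β < 1 := by rw [hβ]; rw [div_lt_one hc]; exact hvc
  have hβsq : (0:ℝ) < 1 - β ^ 2 := by nlinarith
  have hmpos : 0 < m := by rw [hmass]; positivity
  have hWpos : 0 < W := by rw [hW]; positivity
  set s : ℝ := Real.sqrt 2 / β with hs
  have hsβ : s * β = Real.sqrt 2 := by rw [hs]; field_simp
  have hs2 : s ^ 2 * β ^ 2 = 2 := by
    calc s ^ 2 * β ^ 2 = (s * β) ^ 2 := by ring
    _ = 2 := by rw [hsβ]; exact Real.sq_sqrt (by norm_num)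
  -- key physical identity
  have hsumv : (∑ k, v k ^ 2) = β ^ 2 * c ^ 2 := by
    have h0 : (0:ℝ) ≤ ∑ k, v k ^ 2 := by positivity
    rw [hβ, div_pow, div_mul_cancel₀ _ (by positivity : (c:ℝ)^2 ≠ 0)]
    exact (Real.sq_sqrt h0).symm
  have hkey : W ^ 2 * β ^ 2 = c ^ 2 * (P 0 ^ 2 + P 1 ^ 2 + P 2 ^ 2) := by
    have hsum3 : (∑ k, v k ^ 2) = v 0 ^ 2 + v 1 ^ 2 + v 2 ^ 2 := by
      simp [Fin.sum_univ_three]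
    have h : v 0 ^ 2 + v 1 ^ 2 + v 2 ^ 2 = β ^ 2 * c ^ 2 := hsum3 ▸ hsumv
    rw [hW, hP]
    simp only []
    linear_combination (-(c^2*m^2)) * h
  set a : Fin 4 → ℂ :=
    ![-(Complex.I / (hbar:ℂ)) * (W:ℂ),
      (Complex.I / (hbar:ℂ)) * (s:ℂ) * (P 0 : ℂ),
      (Complex.I / (hbar:ℂ)) * (s:ℂ) * (P 1 : ℂ),
      (Complex.I / (hbar:ℂ)) * (s:ℂ) * (P 2 : ℂ)] with ha
  have hfun : (fun y : Fin 4 → ℝ => Complex.exp (-(Complex.I / (hbar : ℂ)) *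
          ((W * y 0 - (Real.sqrt 2 / β) * ∑ k : Fin 3, P k * y k.succ : ℝ) : ℂ)))
      = fun y => Complex.exp (∑ j, a j * y j) := by
    funext y
    congr 1
    rw [ha]
    rw [Fin.sum_univ_four, Fin.sum_univ_three]
    push_cast
    have h1 : ((0:Fin 3).succ : Fin 4) = 1 := rfl
    have h2 : ((1:Fin 3).succ : Fin 4) = 2 := rfl
    have h3 : ((2:Fin 3).succ : Fin 4) = 3 := rfl
    simp only [hs]
    push_cast
    field_simp
    ring
  rw [hfun]
  rw [Lsr]
  rw [pd_exp_lin, pd_exp_lin, pd_exp_lin, pd_exp_lin, pd_mul_exp_lin, pd_mul_exp_lin, pd_mul_exp_lin]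
  set E := Complex.exp (∑ j, a j * x j) with hE
  have hEne : E ≠ 0 := Complex.exp_ne_zero _
  have hbne : (hbar:ℂ) ≠ 0 := by exact_mod_cast hhbar.ne'
  have hWne : (W:ℂ) ≠ 0 := by exact_mod_cast hWpos.ne'
  have ha0 : a 0 = -(Complex.I / (hbar:ℂ)) * (W:ℂ) := rfl
  have ha1 : a 1 = (Complex.I / (hbar:ℂ)) * (s:ℂ) * (P 0 : ℂ) := rfl
  have ha2 : a 2 = (Complex.I / (hbar:ℂ)) * (s:ℂ) * (P 1 : ℂ) := rfl
  have ha3 : a 3 = (Complex.I / (hbar:ℂ)) * (s:ℂ) * (P 2 : ℂ) := rfl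
  rw [ha0, ha1, ha2, ha3]
  have hkeyC : (W:ℂ) ^ 2 * (β:ℂ) ^ 2 = (c:ℂ) ^ 2 * ((P 0:ℂ) ^ 2 + (P 1:ℂ) ^ 2 + (P 2:ℂ) ^ 2) := by
    exact_mod_cast hkey
  have hs2C : (s:ℂ) ^ 2 * (β:ℂ) ^ 2 = 2 := by exact_mod_cast hs2
  have hβne : (β:ℂ) ≠ 0 := by exact_mod_cast hβpos.ne'
  have h2C : ((Real.sqrt 2 : ℝ) : ℂ) ^ 2 = 2 := by
    rw [← Complex.ofReal_pow, Real.sq_sqrt (by norm_num : (0:ℝ) ≤ 2)]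
    norm_num
  simp only [hs]
  push_cast
  field_simp
  ring_nf
  linear_combination (Complex.I ^ 2 *
      Complex.exp (∑ j, a j * x j) * (c:ℂ) ^ 2 *
      ((P 0:ℂ) ^ 2 + (P 1:ℂ) ^ 2 + (P 2:ℂ) ^ 2)) * h2C +
    (-2 * Complex.I ^ 2 * Complex.exp (∑ j, a j * x j)) * hkeyC
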